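/- arXiv:2501.18944 — 2 statements merged into one kernel-verified Lean document; each statement's English description precedes it below -/
import Mathlib

section
/- The function f : R → R defined by f(t) = e^{1 - e^t} + e^t - 1 is not convex on the interval (-∞, 0]: there exist t1, t2 ≤ 0 and α ∈ (0,1) with f(α t1 + (1-α) t2) > α f(t1) + (1-α) f(t2). -/
theorem counterexample_not_convex :
    ∃ (t1 t2 α : ℝ), t1 ≤ 0 ∧ t2 ≤ 0 ∧ 0 < α ∧ α < 1 ∧
      (fun t : ℝ => Real.exp (1 - Real.exp t) + Real.exp t - 1)
          (α * t1 + (1 - α) * t2) >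
        α * ((fun t : ℝ => Real.exp (1 - Real.exp t) + Real.exp t - 1) t1)
          + (1 - α) * ((fun t : ℝ => Real.exp (1 - Real.exp t) + Real.exp t - 1) t2) := by
  refine ⟨-4, 0, 1/2, by norm_num, le_refl 0, by norm_num, by norm_num, ?_⟩
  have h0 : (1/2 : ℝ) * (-4) + (1 - 1/2) * 0 = -2 := by norm_num
  simp only [h0, Real.exp_zero, sub_self]
  set e := Real.exp 1 with he
  set a := Real.exp (-2) with ha
  set b := Real.exp (-4) with hb
  have he_lb : (2.7182818 : ℝ) < e := by
    have := Real.exp_one_gt_d9; linarith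
  have he_ub : e < 2.7182819 := by
    have := Real.exp_one_lt_d9; linarith
  have ha_pos : 0 < a := Real.exp_pos _
  have hb_pos : 0 < b := Real.exp_pos _
  have haE : a * (e * e) = 1 := by
    rw [ha, he, ← Real.exp_add, ← Real.exp_add]; norm_num
  have hbA : b = a * a := by
    rw [ha, hb, ← Real.exp_add]; norm_num
  have ha_ub : a < 0.13534 := by nlinarith
  have ha_lb : 0.13533 < a := by nlinarith
  have hb_ub : b < 0.01832 := by nlinarith
  have hb_lb : 0.018314 < b := by nlinarith
  -- rewrite the exps of (1 - a) and (1 - b)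
  have h1 : Real.exp (1 - a) = e * Real.exp (-a) := by
    rw [he, ← Real.exp_add]; ring_nf
  have h2 : Real.exp (1 - b) = e * Real.exp (-b) := by
    rw [he, ← Real.exp_add]; ring_nf
  have hna : 1 - a < Real.exp (-a) := by
    have h := Real.add_one_lt_exp (x := -a) (neg_ne_zero.mpr (ne_of_gt ha_pos))
    linarith
  have hnb : Real.exp (-b) * (1 + b) < 1 := by
    have h := Real.add_one_lt_exp (x := b) (ne_of_gt hb_pos)
    have hpos : 0 < Real.exp (-b) := Real.exp_pos _
    have : Real.exp (-b) * Real.exp b = 1 := by rw [← Real.exp_add]; simp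
    nlinarith
  have hexa : 0 < Real.exp (-a) := Real.exp_pos _
  have hexb : 0 < Real.exp (-b) := Real.exp_pos _
  rw [h1, h2]
  nlinarith [mul_pos hexb hb_pos, mul_lt_mul_of_pos_left hnb (by linarith : (0:ℝ) < e), mul_lt_mul_of_pos_right he_lb (by linarith : (0:ℝ) < 1 - a)]
end

section
/- Let μ be a probability distribution on a finite set A with full support and Q : A → R, β > 0. The function V ↦ Σ_{a} μ(a) ( e^{(Q(a) - V)/β} + (V - Q(a))/β ) - 1 over V ∈ R is uniquely minimized at V* = β log( Σ_a μ(a) e^{Q(a)/β} ). -/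
theorem extremeV_unique_minimizer {A : Type*} [Fintype A]
    (μ : A → ℝ) (hμ : ∀ a, 0 < μ a) (hμsum : ∑ a, μ a = 1)
    (Q : A → ℝ) (β : ℝ) (hβ : 0 < β) :
    ∀ V : ℝ,
      (∑ a, μ a * (Real.exp ((Q a - (β * Real.log (∑ a', μ a' * Real.exp (Q a' / β)))) / β)
          + ((β * Real.log (∑ a', μ a' * Real.exp (Q a' / β))) - Q a) / β)) - 1 ≤
        (∑ a, μ a * (Real.exp ((Q a - V) / β) + (V - Q a) / β)) - 1 ∧
      ((∑ a, μ a * (Real.exp ((Q a - V) / β) + (V - Q a) / β)) - 1 =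
        (∑ a, μ a * (Real.exp ((Q a - (β * Real.log (∑ a', μ a' * Real.exp (Q a' / β)))) / β)
          + ((β * Real.log (∑ a', μ a' * Real.exp (Q a' / β))) - Q a) / β)) - 1 →
        V = β * Real.log (∑ a', μ a' * Real.exp (Q a' / β))) := by
  intro V
  have hβ' : β ≠ 0 := ne_of_gt hβ
  have hne : (Finset.univ : Finset A).Nonempty := by
    by_contra h
    rw [Finset.not_nonempty_iff_eq_empty] at h
    rw [h, Finset.sum_empty] at hμsum
    norm_num at hμsum
  set S : ℝ := ∑ a', μ a' * Real.exp (Q a' / β) with hSdef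
  have hS0 : (0:ℝ) < S :=
    Finset.sum_pos (fun a _ => mul_pos (hμ a) (Real.exp_pos _)) hne
  set C : ℝ := ∑ a, μ a * Q a with hCdef
  have key : ∀ W : ℝ, ∑ a, μ a * (Real.exp ((Q a - W)/β) + (W - Q a)/β)
      = Real.exp (Real.log S - W/β) + (W/β - C/β) := by
    intro W
    have h1 : ∀ a : A, μ a * (Real.exp ((Q a - W)/β) + (W - Q a)/β)
        = μ a * Real.exp (Q a / β) / Real.exp (W/β) + (μ a * W /β - μ a * Q a/β) := by
      intro a
      have : (Q a - W)/β = Q a / β - W/β := by ring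
      rw [this, Real.exp_sub]
      field_simp
    rw [Finset.sum_congr rfl (fun a _ => h1 a)]
    rw [Finset.sum_add_distrib, Finset.sum_sub_distrib, ← Finset.sum_div, ← Finset.sum_div,
      ← Finset.sum_div, ← Finset.sum_mul, hμsum, Real.exp_sub, Real.exp_log hS0]
    ring
  have hVs : (β * Real.log S) / β = Real.log S := by field_simp
  have hVseq : Real.log S - (β * Real.log S)/β = 0 := by rw [hVs]; ring
  set t : ℝ := Real.log S - V/β with htdef
  have hle := Real.add_one_le_exp t
  constructor
  · rw [key V, key (β * Real.log S), hVseq, Real.exp_zero, hVs]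
    have : t + 1 ≤ Real.exp t := hle
    simp only [htdef] at this
    linarith
  · intro heq
    rw [key V, key (β * Real.log S), hVseq, Real.exp_zero, hVs] at heq
    have hexp : Real.exp t = t + 1 := by
      simp only [htdef]
      linarith
    have ht0 : t = 0 := by
      by_contra h
      have := Real.add_one_lt_exp h
      linarith
    have : V / β = Real.log S := by
      simp only [htdef] at ht0
      linarith
    field_simp at this
    linarith [this]
end
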